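/- Let Δ > 0 and ε_c, ε_J ≥ 0. Let c, c̃ ∈ ℝᵐ and M, M̃ ∈ ℝ^{m×n} satisfy ‖c̃ − c‖_∞ ≤ ε_c and ‖M̃ − M‖_∞ ≤ ε_J. Define ψ_v = ‖max{c,0}‖_∞ − min_{‖d‖≤Δ} ‖max{c + Md, 0}‖_∞ and ψ̃_v = ‖max{c̃,0}‖_∞ − min_{‖d‖≤Δ} ‖max{c̃ + M̃d, 0}‖_∞. Then |ψ̃_v − ψ_v| ≤ 2ε_c + Δ·ε_J. -/

import Mathlib

noncomputable section

/-- `Vec n` is `ℝⁿ` with the Euclidean norm. -/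
abbrev Vec (n : ℕ) := EuclideanSpace ℝ (Fin n)

/-- Componentwise positive part `max{u, 0}`. -/
def posv {m : ℕ} (u : Fin m → ℝ) : Fin m → ℝ := fun i => max (u i) 0

/-- The ℓ∞ norm `‖u‖_∞ = maxᵢ |uᵢ|`. -/
def normInf {m : ℕ} (u : Fin m → ℝ) : ℝ := ⨆ i, |u i|

/-- The matrix ℓ∞ norm: maximum ℓ¹ norm of the rows. -/
def matNormInf {m n : ℕ} (M : Matrix (Fin m) (Fin n) ℝ) : ℝ := ⨆ i, ∑ j, |M i j|

/-- `min_{‖d‖ ≤ Δ} ‖max{c + Md, 0}‖_∞`, the minimal linearized constraint violation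
over the Euclidean ball of radius `Δ`. -/
def vinf {m n : ℕ} (Δ : ℝ) (c : Fin m → ℝ) (M : Matrix (Fin m) (Fin n) ℝ) : ℝ :=
  sInf {t | ∃ d : Vec n, ‖d‖ ≤ Δ ∧ t = normInf (posv (c + M.mulVec d))}

lemma normInf_nonneg {m : ℕ} (u : Fin m → ℝ) : 0 ≤ normInf u :=
  Real.iSup_nonneg fun i => abs_nonneg _

lemma abs_le_normInf {m : ℕ} (u : Fin m → ℝ) (i : Fin m) : |u i| ≤ normInf u :=
  le_ciSup (f := fun i => |u i|) (Set.Finite.bddAbove (Set.finite_range _)) i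

lemma normInf_le {m : ℕ} {u : Fin m → ℝ} {C : ℝ} (hC : 0 ≤ C) (h : ∀ i, |u i| ≤ C) :
    normInf u ≤ C :=
  Real.iSup_le h hC

lemma normInf_posv_le {m : ℕ} (u v : Fin m → ℝ) :
    normInf (posv u) ≤ normInf (posv v) + normInf (u - v) := by
  refine normInf_le (add_nonneg (normInf_nonneg _) (normInf_nonneg _)) fun i => ?_
  have h1 : |posv v i| ≤ normInf (posv v) := abs_le_normInf _ i
  have h2 : |u i - v i| ≤ normInf (u - v) := abs_le_normInf (u - v) i
  have : |posv u i| ≤ |posv v i| + |u i - v i| := by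
    unfold posv
    rw [abs_of_nonneg (le_max_right (u i) 0), abs_of_nonneg (le_max_right (v i) 0)]
    have ha : u i ≤ v i + |u i - v i| := by
      have := le_abs_self (u i - v i); linarith
    refine max_le (ha.trans (add_le_add_left (le_max_left _ _) _)) ?_
    exact add_nonneg (le_max_right _ _) (abs_nonneg _)
  linarith

lemma abs_coord_le {n : ℕ} (d : Vec n) (j : Fin n) : |d j| ≤ ‖d‖ := by
  rw [EuclideanSpace.norm_eq]
  have : |d j| = Real.sqrt (‖d j‖ ^ 2) := by
    rw [Real.sqrt_sq_eq_abs]; simp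
  rw [this]
  exact Real.sqrt_le_sqrt (Finset.single_le_sum (f := fun j => ‖d j‖ ^ 2)
    (fun _ _ => by positivity) (Finset.mem_univ j))

lemma key_bound {m n : ℕ} {Δ εc εJ : ℝ} (hεc : 0 ≤ εc)
    (c ct : Fin m → ℝ) (M Mt : Matrix (Fin m) (Fin n) ℝ)
    (hc : normInf (ct - c) ≤ εc) (hM : matNormInf (Mt - M) ≤ εJ)
    (d : Vec n) (hd : ‖d‖ ≤ Δ) :
    normInf ((ct + Mt.mulVec d) - (c + M.mulVec d)) ≤ εc + Δ * εJ := by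
  have hΔ0 : 0 ≤ Δ := le_trans (norm_nonneg d) hd
  have hεJ0 : 0 ≤ εJ := le_trans (Real.iSup_nonneg fun i => Finset.sum_nonneg
    fun j _ => abs_nonneg _) hM
  refine normInf_le (by positivity) fun i => ?_
  have hrow : ∑ j, |Mt i j - M i j| ≤ εJ := by
    refine le_trans ?_ hM
    exact le_ciSup (f := fun i => ∑ j, |(Mt - M) i j|)
      (Set.Finite.bddAbove (Set.finite_range _)) i
  have hci : |ct i - c i| ≤ εc := le_trans (abs_le_normInf (ct - c) i) hc
  have hMd : |(Mt.mulVec d - M.mulVec d) i| ≤ Δ * εJ := by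
    have : (Mt.mulVec d - M.mulVec d) i = ∑ j, (Mt i j - M i j) * d j := by
      simp [Matrix.mulVec, dotProduct, sub_mul, Finset.sum_sub_distrib]
    rw [this]
    calc |∑ j, (Mt i j - M i j) * d j| ≤ ∑ j, |(Mt i j - M i j) * d j| :=
          Finset.abs_sum_le_sum_abs _ _
      _ ≤ ∑ j, |Mt i j - M i j| * Δ := by
          refine Finset.sum_le_sum fun j _ => ?_
          rw [abs_mul]
          exact mul_le_mul_of_nonneg_left ((abs_coord_le d j).trans hd) (abs_nonneg _)
      _ = (∑ j, |Mt i j - M i j|) * Δ := by rw [← Finset.sum_mul]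
      _ ≤ εJ * Δ := mul_le_mul_of_nonneg_right hrow hΔ0
      _ = Δ * εJ := mul_comm _ _
  have : (ct + Mt.mulVec d - (c + M.mulVec d)) i
      = (ct i - c i) + (Mt.mulVec d - M.mulVec d) i := by
    simp; ring
  rw [this]
  exact (abs_add_le _ _).trans (add_le_add hci hMd)

lemma vinf_le_vinf {m n : ℕ} {Δ εc εJ : ℝ} (hΔ : 0 < Δ) (hεc : 0 ≤ εc)
    (c ct : Fin m → ℝ) (M Mt : Matrix (Fin m) (Fin n) ℝ)
    (hc : normInf (ct - c) ≤ εc) (hM : matNormInf (Mt - M) ≤ εJ) :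
    vinf Δ ct Mt ≤ vinf Δ c M + (εc + Δ * εJ) := by
  have hbdd : BddBelow {t | ∃ d : Vec n, ‖d‖ ≤ Δ ∧ t = normInf (posv (ct + Mt.mulVec d))} := by
    refine ⟨0, fun t ht => ?_⟩
    obtain ⟨d, _, rfl⟩ := ht
    exact normInf_nonneg _
  have hne : {t | ∃ d : Vec n, ‖d‖ ≤ Δ ∧ t = normInf (posv (c + M.mulVec d))}.Nonempty :=
    ⟨_, 0, by simp [hΔ.le], rfl⟩
  have h : ∀ t ∈ {t | ∃ d : Vec n, ‖d‖ ≤ Δ ∧ t = normInf (posv (c + M.mulVec d))},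
      vinf Δ ct Mt - (εc + Δ * εJ) ≤ t := by
    rintro t ⟨d, hd, rfl⟩
    have h1 : vinf Δ ct Mt ≤ normInf (posv (ct + Mt.mulVec d)) :=
      csInf_le hbdd ⟨d, hd, rfl⟩
    have h2 := normInf_posv_le (ct + Mt.mulVec d) (c + M.mulVec d)
    have h3 := key_bound hεc c ct M Mt hc hM d hd
    linarith
  have := le_csInf hne h
  unfold vinf at *
  linarith

/-- The noisy and exact stationarity measures for minimization of the constraint
violation over a trust region of radius `Δ` differ by at most `2ε_c + Δ·ε_J`. -/
theorem abs_psiv_sub_psiv_le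
    {m n : ℕ} (Δ εc εJ : ℝ) (hΔ : 0 < Δ) (hεc : 0 ≤ εc) (hεJ : 0 ≤ εJ)
    (c ct : Fin m → ℝ) (M Mt : Matrix (Fin m) (Fin n) ℝ)
    (hc : normInf (ct - c) ≤ εc)
    (hM : matNormInf (Mt - M) ≤ εJ) :
    |(normInf (posv ct) - vinf Δ ct Mt) - (normInf (posv c) - vinf Δ c M)|
      ≤ 2 * εc + Δ * εJ := by
  have hc' : normInf (c - ct) ≤ εc := by
    refine normInf_le hεc fun i => ?_
    have := abs_le_normInf (ct - c) i
    simp only [Pi.sub_apply] at this ⊢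
    rw [abs_sub_comm]; linarith
  have hM' : matNormInf (M - Mt) ≤ εJ := by
    refine Real.iSup_le (fun i => ?_) hεJ
    have : ∑ j, |(Mt - M) i j| ≤ εJ := le_trans
      (le_ciSup (f := fun i => ∑ j, |(Mt - M) i j|)
        (Set.Finite.bddAbove (Set.finite_range _)) i) hM
    simpa [abs_sub_comm] using this
  have h1 : vinf Δ ct Mt ≤ vinf Δ c M + (εc + Δ * εJ) :=
    vinf_le_vinf hΔ hεc c ct M Mt hc hM
  have h2 : vinf Δ c M ≤ vinf Δ ct Mt + (εc + Δ * εJ) :=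
    vinf_le_vinf hΔ hεc ct c Mt M hc' hM'
  have h3 : normInf (posv ct) ≤ normInf (posv c) + εc :=
    (normInf_posv_le ct c).trans (by linarith)
  have h4 : normInf (posv c) ≤ normInf (posv ct) + εc :=
    (normInf_posv_le c ct).trans (by linarith)
  rw [abs_le]
  constructor <;> linarith
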